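/- Helicity conservation law for capillary fluids: if u is a C² velocity field satisfying Du/Dt + ∇H = 0 with H a C² scalar field, and ω = curl u, then ∂/∂t (uᵀω) + div{ (uᵀω) u + (H − |u|²/2) ω } = 0. -/

import Mathlib

open Matrix

noncomputable section

abbrev V3 := Fin 3 → ℝ

/-- spatial partial derivative in direction `i` -/
def pd (i : Fin 3) (f : V3 → ℝ) (x : V3) : ℝ := fderiv ℝ f x (Pi.single i 1)

/-- gradient of a scalar field -/
def grad (f : V3 → ℝ) (x : V3) : V3 := fun i => pd i f x

/-- divergence of a vector field -/
def vdiv (v : V3 → V3) (x : V3) : ℝ := ∑ i, pd i (fun y => v y i) x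

/-- spatial Jacobian matrix ∂v/∂x -/
def jac (v : V3 → V3) (x : V3) : Matrix (Fin 3) (Fin 3) ℝ := fun i j => pd j (fun y => v y i) x

/-- curl of a vector field -/
def curl (v : V3 → V3) (x : V3) : V3 :=
  ![pd 1 (fun y => v y 2) x - pd 2 (fun y => v y 1) x,
    pd 2 (fun y => v y 0) x - pd 0 (fun y => v y 2) x,
    pd 0 (fun y => v y 1) x - pd 1 (fun y => v y 0) x]

/-- cross product in ℝ³ -/
def cross (a b : V3) : V3 :=
  ![a 1 * b 2 - a 2 * b 1, a 2 * b 0 - a 0 * b 2, a 0 * b 1 - a 1 * b 0]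

/-- partial time derivative of a scalar field -/
def pt (f : ℝ → V3 → ℝ) (t : ℝ) (x : V3) : ℝ := deriv (fun s => f s x) t

/-- partial time derivative of a vector field -/
def ptV (f : ℝ → V3 → V3) (t : ℝ) (x : V3) : V3 := fun i => pt (fun t x => f t x i) t x

/-- material derivative D/Dt = ∂/∂t + uᵀ∇ of a scalar field -/
def Dmat (u : ℝ → V3 → V3) (f : ℝ → V3 → ℝ) (t : ℝ) (x : V3) : ℝ :=
  pt f t x + ∑ i, u t x i * pd i (f t) x

/-- material derivative of a vector field, componentwise -/
def DmatV (u f : ℝ → V3 → V3) (t : ℝ) (x : V3) : V3 :=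
  fun i => Dmat u (fun t x => f t x i) t x

/-!
Put `Π = H + |u|²/2` and `ω = curl u`. Since `(u·∇)u = ∇(|u|²/2) − u × ω`, the momentum
equation takes Lamb's form `∂ₜu = u × ω − ∇Π`, and as `curl ∇Π = 0` the vorticity obeys
Helmholtz's equation `∂ₜω = curl (u × ω)`. Hence `∂ₜ(u·ω) = −∇Π·ω + u·curl (u × ω)`.
The flux equals `Πω − (u × ω) × u`; by `div ω = 0`, `(u × ω)·ω = 0` and
`div (a × b) = b·curl a − a·curl b`, its divergence is `∇Π·ω − u·curl (u × ω)`, so the two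
terms cancel. All mixed partial derivatives commute because `u` and `H` are `C²`.
-/

open Function

section Symmetry

variable {E F : Type*} [NormedAddCommGroup E] [NormedSpace ℝ E]
  [NormedAddCommGroup F] [NormedSpace ℝ F]

theorem fderiv_fderiv_apply_comm {G : E → F} (hG : ContDiff ℝ 2 G) (x v w : E) :
    fderiv ℝ (fun y => fderiv ℝ G y v) x w = fderiv ℝ (fun y => fderiv ℝ G y w) x v := by
  have hd : DifferentiableAt ℝ (fderiv ℝ G) x :=
    (hG.fderiv_right (m := 1) (by norm_num)).differentiable one_ne_zero x
  rw [fderiv_clm_apply hd (differentiableAt_const v),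
    fderiv_clm_apply hd (differentiableAt_const w)]
  simpa using hG.contDiffAt.isSymmSndFDerivAt (by simp) w v

end Symmetry

section VectorAlgebra

variable {E : Type*} [NormedAddCommGroup E] [NormedSpace ℝ E] {v w : E → V3} {x : E}

@[fun_prop]
theorem DifferentiableAt.dotProduct (hv : DifferentiableAt ℝ v x) (hw : DifferentiableAt ℝ w x) :
    DifferentiableAt ℝ (fun y => v y ⬝ᵥ w y) x := by
  simp only [_root_.dotProduct]
  fun_prop

@[fun_prop]
theorem ContDiff.dotProduct {n : WithTop ℕ∞} (hv : ContDiff ℝ n v) (hw : ContDiff ℝ n w) :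
    ContDiff ℝ n fun y => v y ⬝ᵥ w y := by
  simp only [_root_.dotProduct]
  fun_prop

@[fun_prop]
theorem DifferentiableAt.cross (hv : DifferentiableAt ℝ v x) (hw : DifferentiableAt ℝ w x) :
    DifferentiableAt ℝ (fun y => v y ⨯₃ w y) x := by
  refine differentiableAt_pi.2 fun i => ?_
  fin_cases i <;> simp only [cross_apply, Fin.isValue, Fin.reduceFinMk, cons_val] <;> fun_prop

end VectorAlgebra

section Spatial

variable {f g : V3 → ℝ} {v w : V3 → V3} {x : V3}

theorem pd_add (hf : DifferentiableAt ℝ f x) (hg : DifferentiableAt ℝ g x) (i : Fin 3) :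
    pd i (fun y => f y + g y) x = pd i f x + pd i g x := by
  simp [pd, fderiv_fun_add hf hg]

theorem pd_sub (hf : DifferentiableAt ℝ f x) (hg : DifferentiableAt ℝ g x) (i : Fin 3) :
    pd i (fun y => f y - g y) x = pd i f x - pd i g x := by
  simp [pd, fderiv_fun_sub hf hg]

theorem pd_mul (hf : DifferentiableAt ℝ f x) (hg : DifferentiableAt ℝ g x) (i : Fin 3) :
    pd i (fun y => f y * g y) x = pd i f x * g x + f x * pd i g x := by
  simp only [pd, fderiv_fun_mul hf hg, _root_.add_apply, _root_.smul_apply, smul_eq_mul]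
  ring

theorem pd_div_const (hf : DifferentiableAt ℝ f x) (c : ℝ) (i : Fin 3) :
    pd i (fun y => f y / c) x = pd i f x / c := by
  simp [pd, div_eq_mul_inv, fderiv_mul_const hf, mul_comm]

theorem pd_dotProduct (hv : DifferentiableAt ℝ v x) (hw : DifferentiableAt ℝ w x) (i : Fin 3) :
    pd i (fun y => v y ⬝ᵥ w y) x = ((jac v x)ᵀ *ᵥ w x) i + ((jac w x)ᵀ *ᵥ v x) i := by
  have hv' := differentiableAt_pi.1 hv
  have hw' := differentiableAt_pi.1 hw
  simp only [dotProduct, pd, mulVec, transpose_apply, jac]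
  rw [fderiv_fun_sum (A := fun k y => v y k * w y k) fun k _ => (hv' k).mul (hw' k)]
  simp only [FunLike.coe_sum, Finset.sum_apply, fderiv_fun_mul (hv' _) (hw' _),
    ← Finset.sum_add_distrib]
  refine Finset.sum_congr rfl fun k _ => ?_
  simp only [_root_.add_apply, _root_.smul_apply, smul_eq_mul]
  ring

theorem pd_comm (hf : ContDiff ℝ 2 f) (i j : Fin 3) : pd i (pd j f) x = pd j (pd i f) x :=
  fderiv_fderiv_apply_comm hf x _ _

theorem ContDiff.pd {m n : WithTop ℕ∞} (hf : ContDiff ℝ n f) (hmn : m + 1 ≤ n) (i : Fin 3) :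
    ContDiff ℝ m (pd i f) :=
  (hf.fderiv_right hmn).clm_apply contDiff_const

theorem differentiable_pd (hf : ContDiff ℝ 2 f) (i : Fin 3) : Differentiable ℝ (pd i f) :=
  (hf.pd (m := 1) (by norm_num) i).differentiable one_ne_zero

theorem differentiable_grad (hf : ContDiff ℝ 2 f) : Differentiable ℝ (grad f) :=
  fun x => differentiableAt_pi.2 fun i => differentiable_pd hf i x

theorem curl_sub (hv : DifferentiableAt ℝ v x) (hw : DifferentiableAt ℝ w x) :
    curl (fun y => v y - w y) x = curl v x - curl w x := by
  have hv' := differentiableAt_pi.1 hv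
  have hw' := differentiableAt_pi.1 hw
  ext i
  fin_cases i <;>
    simp only [curl, Pi.sub_apply, pd_sub (hv' _) (hw' _), Fin.isValue, Fin.reduceFinMk,
      cons_val] <;>
    ring

theorem curl_grad (hf : ContDiff ℝ 2 f) : curl (grad f) x = 0 := by
  ext i; fin_cases i <;> simp [curl, grad, pd_comm hf]

theorem vdiv_sub (hv : DifferentiableAt ℝ v x) (hw : DifferentiableAt ℝ w x) :
    vdiv (fun y => v y - w y) x = vdiv v x - vdiv w x := by
  have hv' := differentiableAt_pi.1 hv
  have hw' := differentiableAt_pi.1 hw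
  simp [vdiv, pd_sub (hv' _) (hw' _)]

theorem vdiv_smul (hf : DifferentiableAt ℝ f x) (hv : DifferentiableAt ℝ v x) :
    vdiv (fun y => f y • v y) x = grad f x ⬝ᵥ v x + f x * vdiv v x := by
  have hv' := differentiableAt_pi.1 hv
  simp [vdiv, pd_mul hf (hv' _), grad, dotProduct, Finset.mul_sum, ← Finset.sum_add_distrib]

theorem vdiv_curl (hv : ContDiff ℝ 2 v) : vdiv (curl v) x = 0 := by
  have hd i j := differentiable_pd (contDiff_pi.1 hv i) j x
  simp [vdiv, curl, Fin.sum_univ_three, pd_sub (hd _ _) (hd _ _), pd_comm (contDiff_pi.1 hv _)]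

theorem vdiv_cross (hv : DifferentiableAt ℝ v x) (hw : DifferentiableAt ℝ w x) :
    vdiv (fun y => v y ⨯₃ w y) x = w x ⬝ᵥ curl v x - v x ⬝ᵥ curl w x := by
  simp (disch := fun_prop) only [vdiv, curl, cross_apply, dotProduct, Fin.sum_univ_three,
    pd_sub, pd_mul, Fin.isValue, cons_val_zero, cons_val_one, cons_val]
  ring

theorem jac_mulVec_self (v : V3 → V3) (x : V3) :
    jac v x *ᵥ v x = (jac v x)ᵀ *ᵥ v x - v x ⨯₃ curl v x := by
  ext i
  fin_cases i <;>
    simp only [jac, curl, cross_apply, mulVec, dotProduct, Fin.sum_univ_three, Pi.sub_apply,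
      transpose_apply, Fin.isValue, Fin.reduceFinMk, cons_val] <;>
    ring

end Spatial

section SpaceTime

variable {E F G : Type*} [NormedAddCommGroup E] [NormedSpace ℝ E]
  [NormedAddCommGroup F] [NormedSpace ℝ F] [NormedAddCommGroup G] [NormedSpace ℝ G]

theorem ContDiff.uncurry_left {n : WithTop ℕ∞} {f : E → F → G} (x : E)
    (h : ContDiff ℝ n (uncurry f)) : ContDiff ℝ n (f x) :=
  h.comp (contDiff_prodMk_right x)

theorem ContDiff.uncurry_right {n : WithTop ℕ∞} {f : E → F → G} (y : F)
    (h : ContDiff ℝ n (uncurry f)) : ContDiff ℝ n fun a => f a y :=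
  h.comp (contDiff_prodMk_left y)

end SpaceTime

section SpaceTimeV3

variable {f g : ℝ → V3 → ℝ} {s t : ℝ} {x y : V3}

theorem pd_eq_fderiv_uncurry (hf : DifferentiableAt ℝ (uncurry f) (s, y)) (j : Fin 3) :
    pd j (f s) y = fderiv ℝ (uncurry f) (s, y) (0, Pi.single j 1) := by
  have h : HasFDerivAt (f s)
      ((fderiv ℝ (uncurry f) (s, y)).comp (ContinuousLinearMap.inr ℝ ℝ V3)) y :=
    hf.hasFDerivAt.comp y (hasFDerivAt_prodMk_right s y)
  rw [pd, h.fderiv]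
  rfl

theorem pt_eq_fderiv_uncurry (hf : DifferentiableAt ℝ (uncurry f) (s, y)) :
    pt f s y = fderiv ℝ (uncurry f) (s, y) (1, 0) := by
  have h := hf.hasFDerivAt.comp_hasDerivAt s ((hasDerivAt_id s).prodMk (hasDerivAt_const s y))
  exact h.deriv

theorem uncurry_pd (hf : Differentiable ℝ (uncurry f)) (j : Fin 3) :
    (uncurry fun s => pd j (f s)) = fun p => fderiv ℝ (uncurry f) p (0, Pi.single j 1) :=
  funext fun p => pd_eq_fderiv_uncurry (hf p) j

theorem uncurry_pt (hf : Differentiable ℝ (uncurry f)) :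
    uncurry (pt f) = fun p => fderiv ℝ (uncurry f) p (1, 0) :=
  funext fun p => pt_eq_fderiv_uncurry (hf p)

theorem contDiff_uncurry_pd {m n : WithTop ℕ∞} (hf : ContDiff ℝ n (uncurry f))
    (hmn : m + 1 ≤ n) (j : Fin 3) : ContDiff ℝ m (uncurry fun s => pd j (f s)) := by
  rw [uncurry_pd ((hf.of_le (le_trans le_add_self hmn)).differentiable one_ne_zero)]
  exact (hf.fderiv_right hmn).clm_apply contDiff_const

theorem pt_pd_comm (hf : ContDiff ℝ 2 (uncurry f)) (j : Fin 3) :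
    pt (fun s => pd j (f s)) t x = pd j (pt f t) x := by
  have hd := hf.differentiable two_ne_zero
  have hD : ∀ w, Differentiable ℝ fun p => fderiv ℝ (uncurry f) p w := fun w =>
    ((hf.fderiv_right (m := 1) (by norm_num)).differentiable one_ne_zero).clm_apply
      (differentiable_const w)
  calc pt (fun s => pd j (f s)) t x
      = fderiv ℝ (fun p => fderiv ℝ (uncurry f) p (0, Pi.single j 1)) (t, x) (1, 0) := by
        rw [pt_eq_fderiv_uncurry (uncurry_pd hd j ▸ hD _ _), uncurry_pd hd]
    _ = fderiv ℝ (fun p => fderiv ℝ (uncurry f) p (1, 0)) (t, x) (0, Pi.single j 1) :=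
        fderiv_fderiv_apply_comm hf _ _ _
    _ = pd j (pt f t) x := by
        rw [pd_eq_fderiv_uncurry (uncurry_pt hd ▸ hD _ _), uncurry_pt hd]

theorem pt_sub (hf : DifferentiableAt ℝ (fun s => f s x) t)
    (hg : DifferentiableAt ℝ (fun s => g s x) t) :
    pt (fun s y => f s y - g s y) t x = pt f t x - pt g t x :=
  deriv_fun_sub hf hg

theorem pt_dotProduct {a b : ℝ → V3 → V3} (ha : DifferentiableAt ℝ (fun s => a s x) t)
    (hb : DifferentiableAt ℝ (fun s => b s x) t) :
    pt (fun s y => a s y ⬝ᵥ b s y) t x = ptV a t x ⬝ᵥ b t x + a t x ⬝ᵥ ptV b t x := by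
  have ha' i := (differentiableAt_pi.1 ha i).hasDerivAt
  have hb' i := (differentiableAt_pi.1 hb i).hasDerivAt
  simp only [pt, ptV, dotProduct, ← Finset.sum_add_distrib]
  exact (HasDerivAt.fun_sum fun i _ => (ha' i).mul (hb' i)).deriv

variable {u : ℝ → V3 → V3}

theorem contDiff_uncurry_curl {m n : WithTop ℕ∞} (hu : ContDiff ℝ n (uncurry u))
    (hmn : m + 1 ≤ n) : ContDiff ℝ m (uncurry fun s => curl (u s)) := by
  have hd i j := contDiff_uncurry_pd (f := fun s y => u s y i) (contDiff_pi.1 hu i) hmn j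
  refine contDiff_pi.2 fun k => ?_
  fin_cases k
  · exact (hd 2 1).sub (hd 1 2)
  · exact (hd 0 2).sub (hd 2 0)
  · exact (hd 1 0).sub (hd 0 1)

theorem ptV_curl (hu : ContDiff ℝ 2 (uncurry u)) :
    ptV (fun s => curl (u s)) t x = curl (ptV u t) x := by
  have hu' i : ContDiff ℝ 2 (uncurry fun s y => u s y i) := contDiff_pi.1 hu i
  have hd i j : DifferentiableAt ℝ (fun s => pd j (fun y => u s y i) x) t :=
    ((contDiff_uncurry_pd (hu' i) (m := 1) (by norm_num) j).uncurry_right x).differentiable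
      one_ne_zero t
  ext k; fin_cases k
  all_goals
    simp only [ptV, curl, Fin.isValue, Fin.reduceFinMk, cons_val]
    rw [pt_sub (hd _ _) (hd _ _), pt_pd_comm (hu' _), pt_pd_comm (hu' _)]

end SpaceTimeV3

section Fluid

def bernoulliHead (h : V3 → ℝ) (v : V3 → V3) (y : V3) : ℝ := h y + v y ⬝ᵥ v y / 2

theorem grad_bernoulliHead {h : V3 → ℝ} {v : V3 → V3} {x : V3} (hh : DifferentiableAt ℝ h x)
    (hv : DifferentiableAt ℝ v x) :
    grad (bernoulliHead h v) x = grad h x + (jac v x)ᵀ *ᵥ v x := by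
  ext i
  change pd i (fun y => h y + v y ⬝ᵥ v y / 2) x = pd i h x + _
  rw [pd_add hh (by fun_prop), pd_div_const (hv.dotProduct hv), pd_dotProduct hv hv]
  ring

theorem helicity_flux_eq (h : V3 → ℝ) (v w : V3 → V3) :
    (fun y => (v y ⬝ᵥ w y) • v y + (h y - (v y ⬝ᵥ v y) / 2) • w y)
      = fun y => bernoulliHead h v y • w y - v y ⨯₃ w y ⨯₃ v y := by
  funext y
  rw [bernoulliHead, cross_cross_eq_smul_sub_smul, dotProduct_comm (w y)]
  module

theorem DmatV_self (u : ℝ → V3 → V3) (t : ℝ) (x : V3) :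
    DmatV u u t x = ptV u t x + jac (u t) x *ᵥ u t x := by
  ext i
  simp [DmatV, Dmat, ptV, mulVec, dotProduct, jac, mul_comm]

variable {u : ℝ → V3 → V3} {H : ℝ → V3 → ℝ}

theorem ptV_eq_cross_curl_sub_grad {t : ℝ} {x : V3}
    (hmom : DmatV u u t x + grad (H t) x = 0)
    (hu : DifferentiableAt ℝ (u t) x) (hH : DifferentiableAt ℝ (H t) x) :
    ptV u t x = u t x ⨯₃ curl (u t) x - grad (bernoulliHead (H t) (u t)) x := by
  rw [DmatV_self, jac_mulVec_self] at hmom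
  rw [grad_bernoulliHead hH hu]
  linear_combination (norm := module) hmom

theorem ptV_curl_eq_curl_cross (hu : ContDiff ℝ 2 (uncurry u)) (hH : ContDiff ℝ 2 (uncurry H))
    (hmom : ∀ t x, DmatV u u t x + grad (H t) x = 0) {t : ℝ} {x : V3} :
    ptV (fun s => curl (u s)) t x = curl (fun y => u t y ⨯₃ curl (u t) y) x := by
  have hv : ContDiff ℝ 2 (u t) := hu.uncurry_left t
  have hHt : ContDiff ℝ 2 (H t) := hH.uncurry_left t
  have hω : ContDiff ℝ 1 (curl (u t)) := (contDiff_uncurry_curl hu (by norm_num)).uncurry_left t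
  have hB : ContDiff ℝ 2 (bernoulliHead (H t) (u t)) := by
    unfold bernoulliHead
    fun_prop
  have hlamb : ptV u t = fun y => u t y ⨯₃ curl (u t) y - grad (bernoulliHead (H t) (u t)) y :=
    funext fun y => ptV_eq_cross_curl_sub_grad (hmom t y)
      (hv.differentiable two_ne_zero y) (hHt.differentiable two_ne_zero y)
  rw [ptV_curl hu, hlamb, curl_sub ((hv.differentiable two_ne_zero x).cross
      (hω.differentiable one_ne_zero x)) (differentiable_grad hB x), curl_grad hB, sub_zero]

end Fluid

/-- Helicity conservation law for capillary fluids. -/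
theorem capillary_helicity_conservation (u : ℝ → V3 → V3) (H : ℝ → V3 → ℝ)
    (hu : ContDiff ℝ 2 (Function.uncurry u))
    (hH : ContDiff ℝ 2 (Function.uncurry H))
    (hmom : ∀ t x, DmatV u u t x + grad (H t) x = 0)
    (t : ℝ) (x : V3) :
    pt (fun s y => u s y ⬝ᵥ curl (u s) y) t x
      + vdiv (fun y => (u t y ⬝ᵥ curl (u t) y) • u t y
          + (H t y - (u t y ⬝ᵥ u t y) / 2) • curl (u t) y) x = 0 := by
  have hω : ContDiff ℝ 1 (uncurry fun s => curl (u s)) := contDiff_uncurry_curl hu (by norm_num)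
  have hv : ContDiff ℝ 2 (u t) := hu.uncurry_left t
  have hvx := hv.differentiable two_ne_zero x
  have hωx := (hω.uncurry_left t).differentiable one_ne_zero x
  have hHx := (hH.uncurry_left t).differentiable two_ne_zero x
  have hBx : DifferentiableAt ℝ (bernoulliHead (H t) (u t)) x := by
    unfold bernoulliHead
    fun_prop
  rw [pt_dotProduct ((hu.uncurry_right x).differentiable two_ne_zero t)
      ((hω.uncurry_right x).differentiable one_ne_zero t),
    ptV_curl_eq_curl_cross hu hH hmom, ptV_eq_cross_curl_sub_grad (hmom t x) hvx hHx,
    helicity_flux_eq, vdiv_sub (by fun_prop) (by fun_prop), vdiv_smul hBx hωx, vdiv_curl hv,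
    vdiv_cross (hvx.cross hωx) hvx]
  simp only [sub_dotProduct, dotProduct_comm (u t x ⨯₃ _), dot_cross_self]
  ring
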